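/- Let γ = ω^{ε_0} + … + ω^{ε_l} with ε_0 ≥ … ≥ ε_l, let γ_0 = 0 and γ_{i+1} = γ_i + ω^{ε_i}, let P be a tree with rank(P) = γ, k < ω, and f : P → {0,…,k}. Suppose Q is a subtree of P with rank(Q) = γ and F : {0,…,l} → {0,…,k} satisfy: Q^{γ_i} \ Q^{γ_{i+1}} = Q ∩ (P^{γ_i} \ P^{γ_{i+1}}) and f ≡ F(i) on Q^{γ_i} \ Q^{γ_{i+1}} for every i ≤ l. Then for every j ≤ k, writing A = {i ≤ l : F(i) = j} = {a(0) < … < a(p)} and α = ω^{ε_{a(0)}} + … + ω^{ε_{a(p)}} (with α = 0 if A = ∅), there exists a subtree R of P with rank(R) = α such that f(t) = j for all t ∈ R. -/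

import Mathlib

open Ordinal Set

universe u

/-- The set of maximal elements ("leaves") of `P`. -/
def treeLeaves {α : Type u} [PartialOrder α] (P : Set α) : Set α :=
  {t ∈ P | ∀ s ∈ P, ¬ t < s}

/-- The derivative `P' = P \ Leaves P`. -/
def treeDeriv {α : Type u} [PartialOrder α] (P : Set α) : Set α :=
  P \ treeLeaves P

/-- The transfinite iterated derivative `P^ξ`. -/
noncomputable def derivIter {α : Type u} [PartialOrder α] (P : Set α) (ξ : Ordinal.{u}) :
    Set α :=
  Ordinal.limitRecOn ξ P (fun _ ih => treeDeriv ih)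
    (fun o _ ih => ⋂ (ζ : Set.Iio o), ih ζ.1 ζ.2)

/-- `P` is a tree: every ancestor set is well-ordered (a well-founded chain). -/
def IsTree {α : Type u} [PartialOrder α] (P : Set α) : Prop :=
  ∀ t ∈ P, IsChain (· ≤ ·) {s ∈ P | s ≤ t} ∧ {s ∈ P | s ≤ t}.WellFoundedOn (· < ·)

/-- `P` is well-founded: some transfinite derivative is empty. -/
def IsWFTree {α : Type u} [PartialOrder α] (P : Set α) : Prop :=
  ∃ ξ : Ordinal.{u}, derivIter P ξ = ∅

/-- The rank of a well-founded tree: the least `ξ` with `P^ξ = ∅`. -/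
noncomputable def treeRank {α : Type u} [PartialOrder α] (P : Set α) : Ordinal.{u} :=
  sInf {ξ | derivIter P ξ = ∅}

/-- `τ_P(t)`: the largest ordinal `ξ` with `t ∈ P^ξ`. -/
noncomputable def treeTau {α : Type u} [PartialOrder α] (P : Set α) (t : α) : Ordinal.{u} :=
  sSup {ξ | t ∈ derivIter P ξ}

/-- `τ_{P,β}(t)`: the largest ordinal `ξ` with `t ∈ P^{β·ξ}`. -/
noncomputable def treeTauMul {α : Type u} [PartialOrder α] (P : Set α) (β : Ordinal.{u})
    (t : α) : Ordinal.{u} :=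
  sSup {ξ | t ∈ derivIter P (β * ξ)}

/-- `alpProd ε i = ω^{ω^{ε 0}} · ⋯ · ω^{ω^{ε i}}`. -/
noncomputable def alpProd (ε : ℕ → Ordinal.{u}) : ℕ → Ordinal.{u}
  | 0 => omega0 ^ omega0 ^ ε 0
  | (i + 1) => alpProd ε i * omega0 ^ omega0 ^ ε (i + 1)

/-- The separation function `ς_P` of a tree whose rank has decomposition
`ω^{ω^{ε 0}} ⋯ ω^{ω^{ε l}}`: the least `i` such that `s, t` lie in the same block
`P^{α_i·δ} \ P^{α_i·(δ+1)}` for some ordinal `δ`. -/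
noncomputable def sep {α : Type u} [PartialOrder α] (P : Set α) (ε : ℕ → Ordinal.{u})
    (s t : α) : ℕ :=
  sInf {i : ℕ | ∃ δ : Ordinal.{u},
    s ∈ derivIter P (alpProd ε i * δ) \ derivIter P (alpProd ε i * (δ + 1)) ∧
    t ∈ derivIter P (alpProd ε i * δ) \ derivIter P (alpProd ε i * (δ + 1))}

/-- `indProd ε A l = ω^{ω^{ε 0}·1_A(0)} ⋯ ω^{ω^{ε l}·1_A(l)}`. -/
noncomputable def indProd (ε : ℕ → Ordinal.{u}) (A : Set ℕ) : ℕ → Ordinal.{u}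
  | 0 => omega0 ^ (omega0 ^ ε 0 * A.indicator (fun _ => (1 : Ordinal.{u})) 0)
  | (i + 1) => indProd ε A i *
      omega0 ^ (omega0 ^ ε (i + 1) * A.indicator (fun _ => (1 : Ordinal.{u})) (i + 1))

/-- `sumPow ε i = ω^{ε 0} + ⋯ + ω^{ε (i-1)}` (the partial sums `γ_i`). -/
noncomputable def sumPow (ε : ℕ → Ordinal.{u}) : ℕ → Ordinal.{u}
  | 0 => 0
  | (i + 1) => sumPow ε i + omega0 ^ ε i

/-- `indSum ε A i = Σ_{n < i} 1_A(n)·ω^{ε n}`. -/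
noncomputable def indSum (ε : ℕ → Ordinal.{u}) (A : Set ℕ) : ℕ → Ordinal.{u}
  | 0 => 0
  | (i + 1) => indSum ε A i + A.indicator (fun _ => (1 : Ordinal.{u})) i * omega0 ^ ε i


/-!
Take for `R` the union of the levels `Q^{γ_i} \ Q^{γ_{i+1}}` of `Q` with `i ∈ A`; by hypothesis
`f ≡ j` on `R`. Since `Q` is well-founded, a point of `Q^{ξ+1}` lies below a point of
`Q^ξ \ Q^{ξ+1}`, so inside a level of `Q` kept in `R` the derivatives of `R` advance exactly as
those of `Q`, while a level dropped from `R` costs no derivative of `R` at all. Writing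
`α_i = Σ_{n < i, n ∈ A} ω^{ε_n}`, this gives `R ∩ Q^{γ_i} ⊆ R^{α_i} ⊆ Q^{γ_i}`, and since
every derivative of `Q` below its rank has a point of exact height, `rank R = α_{l+1}`.
-/

section derivIter

variable {α : Type u} [PartialOrder α] {P R S : Set α}

lemma derivIter_zero (P : Set α) : derivIter P 0 = P :=
  Ordinal.limitRecOn_zero _ _ _

lemma derivIter_add_one (P : Set α) (ξ : Ordinal.{u}) :
    derivIter P (ξ + 1) = treeDeriv (derivIter P ξ) :=
  Ordinal.limitRecOn_add_one _ _ _ _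

lemma mem_derivIter_of_isSuccLimit {ξ : Ordinal.{u}} (hξ : Order.IsSuccLimit ξ) {x : α} :
    x ∈ derivIter P ξ ↔ ∀ ζ < ξ, x ∈ derivIter P ζ := by
  rw [derivIter, Ordinal.limitRecOn_limit _ _ _ _ hξ, Set.mem_iInter, Subtype.forall]
  rfl

lemma mem_treeDeriv {x : α} : x ∈ treeDeriv P ↔ x ∈ P ∧ ∃ s ∈ P, x < s := by
  simp [treeDeriv, treeLeaves]

lemma derivIter_mono (h : R ⊆ P) (ξ : Ordinal.{u}) : derivIter R ξ ⊆ derivIter P ξ := by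
  induction ξ using Ordinal.limitRecOn with
  | zero => simpa only [derivIter_zero] using h
  | add_one ξ ih =>
    intro x hx
    rw [derivIter_add_one, mem_treeDeriv] at hx ⊢
    obtain ⟨hx, s, hs, hxs⟩ := hx
    exact ⟨ih hx, s, ih hs, hxs⟩
  | limit ξ hξ ih =>
    intro x hx
    rw [mem_derivIter_of_isSuccLimit hξ] at hx ⊢
    exact fun ζ hζ => ih ζ hζ (hx ζ hζ)

lemma derivIter_anti (P : Set α) {ζ ξ : Ordinal.{u}} (h : ζ ≤ ξ) :
    derivIter P ξ ⊆ derivIter P ζ := by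
  induction ξ using Ordinal.limitRecOn with
  | zero => rw [nonpos_iff_eq_zero.1 h]
  | add_one ξ ih =>
    rcases h.lt_or_eq with h | rfl
    · rw [derivIter_add_one]
      exact Set.sdiff_subset.trans (ih (Order.lt_add_one_iff.1 h))
    · rfl
  | limit ξ hξ ih =>
    rcases h.lt_or_eq with h | rfl
    · exact fun x hx => (mem_derivIter_of_isSuccLimit hξ).1 hx ζ h
    · rfl

lemma derivIter_subset (P : Set α) (ξ : Ordinal.{u}) : derivIter P ξ ⊆ P := by
  simpa only [derivIter_zero] using derivIter_anti P (zero_le : 0 ≤ ξ)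

lemma mem_derivIter_add_of_isSuccLimit {β ζ : Ordinal.{u}} (hζ : Order.IsSuccLimit ζ) {x : α} :
    x ∈ derivIter P (β + ζ) ↔ ∀ η < ζ, x ∈ derivIter P (β + η) := by
  refine ⟨fun hx η hη => derivIter_anti P (add_le_add_right hη.le β) hx, fun hx => ?_⟩
  rw [mem_derivIter_of_isSuccLimit (Ordinal.isSuccLimit_add β hζ)]
  intro θ hθ
  obtain ⟨η, hη, hθη⟩ := (Ordinal.lt_add_iff hζ.ne_bot).1 hθ
  exact derivIter_anti P hθη (hx η hη)

lemma derivIter_add (P : Set α) (β ξ : Ordinal.{u}) :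
    derivIter P (β + ξ) = derivIter (derivIter P β) ξ := by
  induction ξ using Ordinal.limitRecOn with
  | zero => rw [add_zero, derivIter_zero]
  | add_one ξ ih => rw [← add_assoc, derivIter_add_one, derivIter_add_one, ih]
  | limit ξ hξ ih =>
    ext x
    rw [mem_derivIter_add_of_isSuccLimit hξ, mem_derivIter_of_isSuccLimit hξ]
    exact forall₂_congr fun η hη => by rw [ih η hη]

lemma derivIter_diff_add_one_subset (P : Set α) (β : Ordinal.{u}) {ζ δ : Ordinal.{u}}
    (hζ : ζ < δ) :
    derivIter P (β + ζ) \ derivIter P (β + ζ + 1) ⊆ derivIter P β \ derivIter P (β + δ) := by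
  refine Set.sdiff_subset_sdiff (derivIter_anti P le_self_add) (derivIter_anti P ?_)
  rw [add_assoc]
  exact add_le_add_right (Order.add_one_le_of_lt hζ) β

lemma subset_derivIter_of_forall_exists_gt (hSP : S ⊆ P) (hS : ∀ s ∈ S, ∃ s' ∈ S, s < s')
    (ξ : Ordinal.{u}) : S ⊆ derivIter P ξ := by
  induction ξ using Ordinal.limitRecOn with
  | zero => rwa [derivIter_zero]
  | add_one ξ ih =>
    intro s hs
    obtain ⟨s', hs', hss'⟩ := hS s hs
    rw [derivIter_add_one, mem_treeDeriv]
    exact ⟨ih hs, s', ih hs', hss'⟩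
  | limit ξ hξ ih =>
    exact fun s hs => (mem_derivIter_of_isSuccLimit hξ).2 fun ζ hζ => ih ζ hζ hs

lemma isWFTree_of_pos_treeRank (h : 0 < treeRank P) : IsWFTree P := by
  by_contra hP
  have hempty : {ξ : Ordinal.{u} | derivIter P ξ = ∅} = ∅ := Set.not_nonempty_iff_eq_empty.1 hP
  rw [treeRank, hempty, Ordinal.sInf_empty] at h
  exact h.false

lemma treeRank_eq {ξ : Ordinal.{u}} (hξ : derivIter P ξ = ∅)
    (hlt : ∀ ζ < ξ, (derivIter P ζ).Nonempty) : treeRank P = ξ := by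
  refine le_antisymm (csInf_le' hξ) (le_csInf ⟨ξ, hξ⟩ fun ζ hζ => ?_)
  by_contra! h
  exact (hlt ζ h).ne_empty hζ

namespace IsWFTree

lemma derivIter_treeRank (hP : IsWFTree P) : derivIter P (treeRank P) = ∅ :=
  csInf_mem hP

lemma eq_empty_of_forall_exists_gt (hP : IsWFTree P) (hSP : S ⊆ P)
    (hS : ∀ s ∈ S, ∃ s' ∈ S, s < s') : S = ∅ := by
  obtain ⟨ξ, hξ⟩ := hP
  exact Set.subset_empty_iff.1 (hξ ▸ subset_derivIter_of_forall_exists_gt hSP hS ξ)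

lemma exists_gt_mem_derivIter_diff (hP : IsWFTree P) {ξ : Ordinal.{u}} {t : α}
    (ht : t ∈ derivIter P (ξ + 1)) :
    ∃ u, t < u ∧ u ∈ derivIter P ξ \ derivIter P (ξ + 1) := by
  rw [derivIter_add_one, mem_treeDeriv] at ht
  obtain ⟨-, s, hs, hts⟩ := ht
  by_contra! h
  have hempty : {u ∈ derivIter P ξ | t < u} = ∅ := by
    refine hP.eq_empty_of_forall_exists_gt (fun u hu => derivIter_subset P ξ hu.1) ?_
    rintro u ⟨hu, htu⟩
    have hu' : u ∈ derivIter P (ξ + 1) := by_contra fun hu' => h u htu ⟨hu, hu'⟩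
    rw [derivIter_add_one, mem_treeDeriv] at hu'
    obtain ⟨-, v, hv, huv⟩ := hu'
    exact ⟨v, ⟨hv, htu.trans huv⟩, huv⟩
  exact (Set.eq_empty_iff_forall_notMem.1 hempty) s ⟨hs, hts⟩

lemma nonempty_derivIter_diff_of_lt_treeRank (hP : IsWFTree P) {β : Ordinal.{u}}
    (hβ : β < treeRank P) : (derivIter P β \ derivIter P (β + 1)).Nonempty := by
  by_contra! h
  have hempty : derivIter P β = ∅ := by
    refine hP.eq_empty_of_forall_exists_gt (derivIter_subset P β) fun s hs => ?_
    have hs' := Set.sdiff_eq_empty.1 h hs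
    rw [derivIter_add_one, mem_treeDeriv] at hs'
    exact hs'.2
  exact (show treeRank P ≤ β from csInf_le' hempty).not_gt hβ

lemma inter_derivIter_add_subset (hP : IsWFTree P) {β β' δ : Ordinal.{u}}
    (hbase : R ∩ derivIter P β ⊆ derivIter R β')
    (hblock : derivIter P β \ derivIter P (β + δ) ⊆ R) {ζ : Ordinal.{u}} (hζ : ζ ≤ δ) :
    R ∩ derivIter P (β + ζ) ⊆ derivIter R (β' + ζ) := by
  induction ζ using Ordinal.limitRecOn with
  | zero => simpa only [add_zero] using hbase
  | add_one ζ ih =>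
    have hζδ : ζ < δ := Order.add_one_le_iff.1 hζ
    rintro t ⟨htR, ht⟩
    rw [← add_assoc] at ht ⊢
    obtain ⟨u, htu, hu⟩ := hP.exists_gt_mem_derivIter_diff ht
    have huR : u ∈ R := hblock (derivIter_diff_add_one_subset P β hζδ hu)
    rw [derivIter_add_one, mem_treeDeriv]
    exact ⟨ih hζδ.le ⟨htR, derivIter_anti P le_self_add ht⟩, u, ih hζδ.le ⟨huR, hu.1⟩, htu⟩
  | limit ζ hζlim ih =>
    rintro t ⟨htR, ht⟩
    rw [mem_derivIter_add_of_isSuccLimit hζlim] at ht ⊢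
    exact fun η hη => ih η hη (hη.le.trans hζ) ⟨htR, ht η hη⟩

end IsWFTree

end derivIter

section levelUnion

variable {α : Type u} [PartialOrder α] {Q : Set α} {ε : ℕ → Ordinal.{u}} {A : Set ℕ}

lemma sumPow_mono (ε : ℕ → Ordinal.{u}) : Monotone (sumPow ε) :=
  monotone_nat_of_le_succ fun _ => le_self_add

lemma indSum_succ_of_mem {i : ℕ} (hi : i ∈ A) :
    indSum ε A (i + 1) = indSum ε A i + omega0 ^ ε i := by
  rw [indSum, Set.indicator_of_mem hi, one_mul]

lemma indSum_succ_of_notMem {i : ℕ} (hi : i ∉ A) : indSum ε A (i + 1) = indSum ε A i := by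
  rw [indSum, Set.indicator_of_notMem hi, zero_mul, add_zero]

def levelUnion (Q : Set α) (ε : ℕ → Ordinal.{u}) (A : Set ℕ) : Set α :=
  ⋃ i ∈ A, derivIter Q (sumPow ε i) \ derivIter Q (sumPow ε (i + 1))

lemma mem_levelUnion {t : α} : t ∈ levelUnion Q ε A ↔
    ∃ i ∈ A, t ∈ derivIter Q (sumPow ε i) \ derivIter Q (sumPow ε (i + 1)) := by
  simp only [levelUnion, Set.mem_iUnion, exists_prop]

lemma level_subset_levelUnion {i : ℕ} (hi : i ∈ A) :
    derivIter Q (sumPow ε i) \ derivIter Q (sumPow ε (i + 1)) ⊆ levelUnion Q ε A :=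
  fun _ ht => mem_levelUnion.2 ⟨i, hi, ht⟩

lemma levelUnion_subset : levelUnion Q ε A ⊆ Q :=
  Set.iUnion₂_subset fun _ _ => Set.sdiff_subset.trans (derivIter_subset Q _)

lemma levelUnion_inter_derivIter_subset_of_notMem {i : ℕ} (hi : i ∉ A) :
    levelUnion Q ε A ∩ derivIter Q (sumPow ε i) ⊆ derivIter Q (sumPow ε (i + 1)) := by
  rintro t ⟨htR, ht⟩
  obtain ⟨n, hn, htn, htn'⟩ := mem_levelUnion.1 htR
  rcases lt_trichotomy n i with h | rfl | h
  · exact absurd (derivIter_anti Q (sumPow_mono ε h) ht) htn'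
  · exact absurd hn hi
  · exact derivIter_anti Q (sumPow_mono ε h) htn

lemma derivIter_levelUnion_subset (i : ℕ) :
    derivIter (levelUnion Q ε A) (indSum ε A i) ⊆ derivIter Q (sumPow ε i) := by
  induction i with
  | zero => simpa only [indSum, sumPow, derivIter_zero] using levelUnion_subset
  | succ i ih =>
    by_cases hi : i ∈ A
    · rw [indSum_succ_of_mem hi, sumPow, derivIter_add, derivIter_add]
      exact derivIter_mono ih _
    · rw [indSum_succ_of_notMem hi]
      exact fun t ht => levelUnion_inter_derivIter_subset_of_notMem hi
        ⟨derivIter_subset _ _ ht, ih ht⟩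

lemma levelUnion_inter_derivIter_subset (hQ : IsWFTree Q) (i : ℕ) :
    levelUnion Q ε A ∩ derivIter Q (sumPow ε i) ⊆ derivIter (levelUnion Q ε A) (indSum ε A i) := by
  induction i with
  | zero => simpa only [indSum, sumPow, derivIter_zero] using Set.inter_subset_left
  | succ i ih =>
    by_cases hi : i ∈ A
    · rw [indSum_succ_of_mem hi, sumPow]
      exact hQ.inter_derivIter_add_subset ih (level_subset_levelUnion hi) le_rfl
    · rw [indSum_succ_of_notMem hi]
      exact (Set.inter_subset_inter_right _ (derivIter_anti Q (sumPow_mono ε i.le_succ))).trans ih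

lemma nonempty_derivIter_levelUnion (hQ : IsWFTree Q) {n : ℕ} (hn : sumPow ε n ≤ treeRank Q)
    {ξ : Ordinal.{u}} (hξ : ξ < indSum ε A n) : (derivIter (levelUnion Q ε A) ξ).Nonempty := by
  induction n with
  | zero => simp [indSum] at hξ
  | succ n ih =>
    rcases lt_or_ge ξ (indSum ε A n) with h | h
    · exact ih ((sumPow_mono ε n.le_succ).trans hn) h
    have hn' : n ∈ A := by
      by_contra hn'
      exact (indSum_succ_of_notMem hn' ▸ hξ).not_ge h
    set ζ := ξ - indSum ε A n
    have hζ : ζ < omega0 ^ ε n := by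
      rwa [indSum_succ_of_mem hn', ← Ordinal.add_sub_cancel_of_le h, add_lt_add_iff_left] at hξ
    have hlt : sumPow ε n + ζ < treeRank Q :=
      ((add_lt_add_iff_left _).2 hζ).trans_le hn
    obtain ⟨t, ht⟩ := hQ.nonempty_derivIter_diff_of_lt_treeRank hlt
    have htR := level_subset_levelUnion hn' (derivIter_diff_add_one_subset Q _ hζ ht)
    refine ⟨t, Ordinal.add_sub_cancel_of_le h ▸ ?_⟩
    exact hQ.inter_derivIter_add_subset (levelUnion_inter_derivIter_subset hQ n)
      (level_subset_levelUnion hn') hζ.le ⟨htR, ht.1⟩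

lemma treeRank_levelUnion (hQ : IsWFTree Q) {n : ℕ} (hn : treeRank Q = sumPow ε n) :
    treeRank (levelUnion Q ε A) = indSum ε A n := by
  refine treeRank_eq ?_ fun ξ hξ => nonempty_derivIter_levelUnion hQ hn.ge hξ
  rw [← Set.subset_empty_iff, ← hQ.derivIter_treeRank, hn]
  exact derivIter_levelUnion_subset n

end levelUnion

theorem statement6_general {α : Type u} [PartialOrder α] (l k : ℕ) (ε : ℕ → Ordinal.{u})
    (P : Set α) (f : α → Fin (k + 1))
    (Q : Set α) (hQP : Q ⊆ P) (hQrank : treeRank Q = sumPow ε (l + 1))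
    (F : Fin (l + 1) → Fin (k + 1))
    (hlevel : ∀ (i : ℕ) (hi : i ≤ l),
      (derivIter Q (sumPow ε i) \ derivIter Q (sumPow ε (i + 1)) =
        Q ∩ (derivIter P (sumPow ε i) \ derivIter P (sumPow ε (i + 1)))) ∧
      (∀ t ∈ derivIter Q (sumPow ε i) \ derivIter Q (sumPow ε (i + 1)),
        f t = F ⟨i, Nat.lt_succ_of_le hi⟩))
    (j : Fin (k + 1)) :
    ∃ R ⊆ P, treeRank R = indSum ε {i : ℕ | ∃ h : i < l + 1, F ⟨i, h⟩ = j} (l + 1) ∧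
      ∀ t ∈ R, f t = j := by
  have hQ : IsWFTree Q := by
    refine isWFTree_of_pos_treeRank (hQrank ▸ ?_)
    exact (Ordinal.opow_pos _ omega0_pos).trans_le le_add_self
  refine ⟨levelUnion Q ε _, levelUnion_subset.trans hQP, treeRank_levelUnion hQ hQrank, ?_⟩
  intro t ht
  obtain ⟨i, ⟨hi, hFi⟩, hti⟩ := mem_levelUnion.1 ht
  exact ((hlevel i (Nat.lt_succ_iff.1 hi)).2 t hti).trans hFi

/-- with `Q ⊆ P` of full rank whose levels are cut out from the
levels of `P` and on whose `i`-th level `f ≡ F(i)`, for every color `j` there is a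
subtree `R` of `P` of rank `Σ_{i ∈ A} ω^{ε_i}` (where `A = {i ≤ l : F(i) = j}`,
with rank `0` when `A = ∅`) on which `f` is identically `j`. -/
theorem statement6 {α : Type u} [PartialOrder α] (l k : ℕ) (ε : ℕ → Ordinal.{u})
    (hε : ∀ i < l, ε (i + 1) ≤ ε i) (P : Set α) (hP : IsTree P) (hWF : IsWFTree P)
    (hrank : treeRank P = sumPow ε (l + 1)) (f : α → Fin (k + 1))
    (Q : Set α) (hQP : Q ⊆ P) (hQrank : treeRank Q = sumPow ε (l + 1))
    (F : Fin (l + 1) → Fin (k + 1))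
    (hlevel : ∀ (i : ℕ) (hi : i ≤ l),
      (derivIter Q (sumPow ε i) \ derivIter Q (sumPow ε (i + 1)) =
        Q ∩ (derivIter P (sumPow ε i) \ derivIter P (sumPow ε (i + 1)))) ∧
      (∀ t ∈ derivIter Q (sumPow ε i) \ derivIter Q (sumPow ε (i + 1)),
        f t = F ⟨i, Nat.lt_succ_of_le hi⟩))
    (j : Fin (k + 1)) :
    ∃ R ⊆ P, treeRank R = indSum ε {i : ℕ | ∃ h : i < l + 1, F ⟨i, h⟩ = j} (l + 1) ∧
      ∀ t ∈ R, f t = j :=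
  statement6_general l k ε P f Q hQP hQrank F hlevel j
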